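/- Let c > 0 and C ∈ ℝ, and define u(x,t) = 4c/(1 + c²(x − ct + C)²). Then u is a pointwise classical solution of the Benjamin–Ono equation: u is smooth, for every (x,t) the principal value H(∂_x² u(·,t))(x) exists, and ∂_t u(x,t) = H(∂_x² u(·,t))(x) − u(x,t) · ∂_x u(x,t) for all (x,t) ∈ ℝ². -/

import Mathlib

open MeasureTheory Filter

/-- The principal value Hilbert transform of `f : ℝ → ℝ` at `x` exists and equals `A`. -/
def HilbertPVR (f : ℝ → ℝ) (x A : ℝ) : Prop :=
  Tendsto (fun ε : ℝ =>
      (1 / Real.pi) * ∫ y in {y : ℝ | ε < |x - y|}, f y / (x - y))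
    (nhdsWithin 0 (Set.Ioi 0)) (nhds A)

/-- The BO soliton `u(x,t) = 4c/(1 + c²(x - ct + C)²)`. -/
noncomputable def BOsoliton (c C x t : ℝ) : ℝ :=
  4 * c / (1 + c ^ 2 * (x - c * t + C) ^ 2)


open Real Set Topology



noncomputable def KH (t : ℝ) : ℝ := (6*t^2-2)/(1+t^2)^3
noncomputable def MH (t : ℝ) : ℝ := (2*t^3-6*t)/(1+t^2)^3

noncomputable def psiH (t s : ℝ) : ℝ :=
  KH t * (Real.log (1+s^2)/2) + MH t * Real.arctan s
  + ((-4*t/(1+t^2)^2)*s + (-3/(1+t^2)+4/(1+t^2)^2))/(1+s^2)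
  + ((-2*t/(1+t^2))*s + 2/(1+t^2))/(1+s^2)^2

noncomputable def phiH (t s : ℝ) : ℝ := psiH t s - KH t * Real.log (t-s)

lemma phiH_hasDerivAt (t s : ℝ) (hs : s ≠ t) :
    HasDerivAt (phiH t) ((6*s^2-2)/((1+s^2)^3*(t-s))) s := by
  have h1 : (1:ℝ) + s^2 ≠ 0 := by positivity
  have hD : (1:ℝ) + t^2 ≠ 0 := by positivity
  have h2 : t - s ≠ 0 := sub_ne_zero.mpr (Ne.symm hs)
  have L1 : HasDerivAt (fun u : ℝ => 1 + u^2) (2*s) s := by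
    simpa using ((hasDerivAt_pow 2 s).const_add 1)
  have L2 : HasDerivAt (fun u : ℝ => Real.log (1+u^2)) ((1+s^2)⁻¹ * (2*s)) s :=
    by have := (Real.hasDerivAt_log h1).comp s L1; exact this
  have L3 : HasDerivAt (fun u : ℝ => t - u) (-1) s := by
    simpa using (hasDerivAt_id s).const_sub t
  have L4 : HasDerivAt (fun u : ℝ => Real.log (t-u)) ((t-s)⁻¹ * (-1)) s :=
    (Real.hasDerivAt_log h2).comp s L3
  have L5 : HasDerivAt Real.arctan (1/(1+s^2)) s := Real.hasDerivAt_arctan s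
  have Lb : HasDerivAt (fun u : ℝ => (-4*t/(1+t^2)^2)*u + (-3/(1+t^2)+4/(1+t^2)^2))
      (-4*t/(1+t^2)^2) s := by
    simpa using ((hasDerivAt_id s).const_mul (-4*t/(1+t^2)^2)).add_const
      (-3/(1+t^2)+4/(1+t^2)^2)
  have Ld : HasDerivAt (fun u : ℝ => (-2*t/(1+t^2))*u + 2/(1+t^2)) (-2*t/(1+t^2)) s := by
    simpa using ((hasDerivAt_id s).const_mul (-2*t/(1+t^2))).add_const (2/(1+t^2))
  have Lsq : HasDerivAt (fun u : ℝ => (1+u^2)^2) ((2:ℕ)*(1+s^2)^1*(2*s)) s := L1.pow 2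
  have hsq : (1+s^2)^2 ≠ 0 := pow_ne_zero _ h1
  have main : HasDerivAt (phiH t)
      ((KH t * ((1+s^2)⁻¹ * (2*s)/2) + MH t * (1/(1+s^2))
        + ((-4*t/(1+t^2)^2) * (1+s^2) - ((-4*t/(1+t^2)^2)*s + (-3/(1+t^2)+4/(1+t^2)^2)) * (2*s))/(1+s^2)^2
        + ((-2*t/(1+t^2)) * (1+s^2)^2 - ((-2*t/(1+t^2))*s + 2/(1+t^2)) * ((2:ℕ)*(1+s^2)^1*(2*s)))/((1+s^2)^2)^2)
        - KH t * ((t-s)⁻¹ * (-1))) s := by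
    unfold phiH psiH
    exact (((((L2.div_const 2).const_mul (KH t)).add (L5.const_mul (MH t))).add
      (Lb.div L1 h1)).add (Ld.div Lsq hsq)).sub (L4.const_mul (KH t))
  convert main using 1
  unfold KH MH
  field_simp
  ring


lemma aux_div_tendsto_atTop (a b : ℝ) :
    Tendsto (fun s : ℝ => (a*s+b)/(1+s^2)) atTop (nhds 0) := by
  have h : Tendsto (fun s : ℝ => (a + b*s⁻¹)/(s⁻¹ + s)) atTop (nhds 0) := by
    apply Tendsto.div_atTop (f := fun s : ℝ => a + b*s⁻¹) (g := fun s : ℝ => s⁻¹ + s)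
    · simpa using (tendsto_const_nhds (x := a)).add
        ((tendsto_inv_atTop_zero).const_mul b)
    · exact Tendsto.add_atTop tendsto_inv_atTop_zero tendsto_id
  apply h.congr'
  filter_upwards [eventually_gt_atTop (0:ℝ)] with s hs
  have hs' : s ≠ 0 := ne_of_gt hs
  rw [div_eq_div_iff (by positivity) (by positivity)]
  field_simp

lemma aux_div2_tendsto_atTop (a b : ℝ) :
    Tendsto (fun s : ℝ => (a*s+b)/(1+s^2)^2) atTop (nhds 0) := by
  have h : Tendsto (fun s : ℝ => (a + b*s⁻¹)/(s⁻¹*(1+s^2)^2)) atTop (nhds 0) := by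
    apply Tendsto.div_atTop (f := fun s : ℝ => a + b*s⁻¹) (g := fun s : ℝ => s⁻¹*(1+s^2)^2)
    · simpa using (tendsto_const_nhds (x := a)).add
        ((tendsto_inv_atTop_zero).const_mul b)
    · apply tendsto_atTop_mono' _ _ (tendsto_pow_atTop (n := 3) (by norm_num))
      filter_upwards [eventually_ge_atTop (1:ℝ)] with s hs
      have hs0 : (0:ℝ) < s := lt_of_lt_of_le one_pos hs
      rw [inv_mul_eq_div, le_div_iff₀ hs0]
      nlinarith [sq_nonneg s, sq_nonneg (s^2-1)]
  apply h.congr'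
  filter_upwards [eventually_gt_atTop (0:ℝ)] with s hs
  have hs' : s ≠ 0 := ne_of_gt hs
  rw [div_eq_div_iff (by positivity) (by positivity)]
  field_simp


lemma aux_neg_comp {f g : ℝ → ℝ} {l : ℝ} (h : Tendsto f atTop (nhds l))
    (hfg : ∀ s, f (-s) = g s) : Tendsto g atBot (nhds l) :=
  Tendsto.congr hfg (h.comp tendsto_neg_atBot_atTop)

lemma aux_log_tendsto_atTop (t : ℝ) :
    Tendsto (fun s : ℝ => Real.log (1+s^2)/2 - Real.log (t-s)) atTop (nhds 0) := by
  have hc : ContinuousAt (fun u : ℝ => (u^2 + 1)/((t*u - 1)^2)) 0 := by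
    apply ContinuousAt.div
    · fun_prop
    · fun_prop
    · norm_num
  have h1 : Tendsto (fun s : ℝ => ((s⁻¹)^2 + 1)/((t*s⁻¹ - 1)^2)) atTop (nhds 1) := by
    have := hc.tendsto.comp tendsto_inv_atTop_zero
    simp only [Function.comp_def] at this
    convert this using 2 <;> norm_num
  have h2 : Tendsto (fun s : ℝ => Real.log (((s⁻¹)^2 + 1)/((t*s⁻¹ - 1)^2))) atTop (nhds 0) := by
    have := (Real.continuousAt_log one_ne_zero).tendsto.comp h1
    simpa [Function.comp_def] using this
  have h3 := h2.div_const 2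
  rw [zero_div] at h3
  apply h3.congr'
  filter_upwards [eventually_gt_atTop (max t 0)] with s hs
  have hst : t < s := lt_of_le_of_lt (le_max_left t 0) hs
  have hs0 : (0:ℝ) < s := lt_of_le_of_lt (le_max_right t 0) hs
  have hne : t - s ≠ 0 := sub_ne_zero.mpr (ne_of_lt hst)
  have h4 : t*s⁻¹ - 1 ≠ 0 := by
    have : t*s⁻¹ < 1 := by rw [← div_eq_mul_inv]; exact (div_lt_one hs0).mpr hst
    linarith
  have e1 : ((s⁻¹)^2 + 1)/((t*s⁻¹ - 1)^2) = (1+s^2)/(t-s)^2 := by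
    rw [div_eq_div_iff (pow_ne_zero _ h4) (pow_ne_zero _ hne)]
    field_simp
  rw [e1, Real.log_div (by positivity) (by positivity)]
  rw [show ((t-s)^2 : ℝ) = (t-s)^(2:ℕ) by norm_num, Real.log_pow]
  push_cast
  ring

lemma aux_log_tendsto_atBot (t : ℝ) :
    Tendsto (fun s : ℝ => Real.log (1+s^2)/2 - Real.log (t-s)) atBot (nhds 0) := by
  apply aux_neg_comp (aux_log_tendsto_atTop (-t))
  intro s
  rw [neg_sq, show -t - -s = -(t - s) by ring, Real.log_neg_eq_log]

lemma aux_div_tendsto_atBot (a b : ℝ) :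
    Tendsto (fun s : ℝ => (a*s+b)/(1+s^2)) atBot (nhds 0) := by
  apply aux_neg_comp (aux_div_tendsto_atTop (-a) b)
  intro s; rw [neg_sq]; ring_nf

lemma aux_div2_tendsto_atBot (a b : ℝ) :
    Tendsto (fun s : ℝ => (a*s+b)/(1+s^2)^2) atBot (nhds 0) := by
  apply aux_neg_comp (aux_div2_tendsto_atTop (-a) b)
  intro s; rw [neg_sq]; ring_nf

lemma phiH_tendsto_atTop (t : ℝ) :
    Tendsto (phiH t) atTop (nhds (MH t * (π/2))) := by
  have all := ((((aux_log_tendsto_atTop t).const_mul (KH t)).add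
      ((tendsto_nhds_of_tendsto_nhdsWithin tendsto_arctan_atTop).const_mul (MH t))).add
      (aux_div_tendsto_atTop (-4*t/(1+t^2)^2) (-3/(1+t^2)+4/(1+t^2)^2))).add
      (aux_div2_tendsto_atTop (-2*t/(1+t^2)) (2/(1+t^2)))
  have e : KH t * 0 + MH t * (π/2) + 0 + 0 = MH t * (π/2) := by ring
  rw [e] at all
  apply all.congr
  intro s
  unfold phiH psiH
  ring

lemma phiH_tendsto_atBot (t : ℝ) :
    Tendsto (phiH t) atBot (nhds (MH t * (-(π/2)))) := by
  have all := ((((aux_log_tendsto_atBot t).const_mul (KH t)).add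
      ((tendsto_nhds_of_tendsto_nhdsWithin tendsto_arctan_atBot).const_mul (MH t))).add
      (aux_div_tendsto_atBot (-4*t/(1+t^2)^2) (-3/(1+t^2)+4/(1+t^2)^2))).add
      (aux_div2_tendsto_atBot (-2*t/(1+t^2)) (2/(1+t^2)))
  have e : KH t * 0 + MH t * (-(π/2)) + 0 + 0 = MH t * (-(π/2)) := by ring
  rw [e] at all
  apply all.congr
  intro s
  unfold phiH psiH
  ring

lemma continuous_psiH (t : ℝ) : Continuous (psiH t) := by
  have h1 : ∀ s:ℝ, (1:ℝ)+s^2 ≠ 0 := fun s => by positivity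
  unfold psiH
  refine ((Continuous.add (Continuous.add ?_ ?_) ?_).add ?_)
  · exact continuous_const.mul (((continuous_const.add (continuous_pow 2)).log h1).div_const 2)
  · exact continuous_const.mul Real.continuous_arctan
  · exact Continuous.div (by fun_prop) (by fun_prop) h1
  · exact Continuous.div (by fun_prop) (by fun_prop) (fun s => pow_ne_zero _ (h1 s))

lemma phiH_diff_tendsto (t c : ℝ) (hc : 0 < c) :
    Tendsto (fun ε : ℝ => phiH t (t - c*ε) - phiH t (t + c*ε))
      (nhdsWithin 0 (Set.Ioi 0)) (nhds 0) := by
  have hψ := continuous_psiH t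
  have h1 : Tendsto (fun ε:ℝ => t - c*ε) (nhdsWithin 0 (Set.Ioi 0)) (nhds t) := by
    have hcont : Continuous fun ε:ℝ => t - c*ε := by fun_prop
    have := hcont.tendsto 0
    simp only [mul_zero, sub_zero] at this
    exact this.mono_left nhdsWithin_le_nhds
  have h2 : Tendsto (fun ε:ℝ => t + c*ε) (nhdsWithin 0 (Set.Ioi 0)) (nhds t) := by
    have hcont : Continuous fun ε:ℝ => t + c*ε := by fun_prop
    have := hcont.tendsto 0
    simp only [mul_zero, add_zero] at this
    exact this.mono_left nhdsWithin_le_nhds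
  have main := ((hψ.tendsto t).comp h1).sub ((hψ.tendsto t).comp h2)
  rw [sub_self] at main
  apply main.congr'
  filter_upwards [self_mem_nhdsWithin] with ε hε
  have hε0 : (0:ℝ) < ε := hε
  unfold phiH
  rw [show t - (t - c*ε) = c*ε by ring, show t - (t + c*ε) = -(c*ε) by ring,
    Real.log_neg_eq_log]
  simp [Function.comp]

lemma hilbert_main (c a x : ℝ) (hc : 0 < c) :
    HilbertPVR (fun y => 4*c^3*(6*c^2*(y-a)^2-2)/(1+c^2*(y-a)^2)^3) x
      (4*c^3 * MH (c*(x-a))) := by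
  set t := c*(x-a) with ht
  set G2 : ℝ → ℝ := fun y => 4*c^3*(6*c^2*(y-a)^2-2)/(1+c^2*(y-a)^2)^3 with hG2
  set H : ℝ → ℝ := fun y => G2 y / (x - y) with hH
  set Φ : ℝ → ℝ := fun y => 4*c^3 * phiH t (c*(y-a)) with hΦ
  -- derivative of Φ
  have hasDerivΦ : ∀ y : ℝ, y ≠ x → HasDerivAt Φ (H y) y := by
    intro y hy
    have hst : c*(y-a) ≠ t := by
      rw [ht]
      intro h
      exact hy (by
        have := mul_left_cancel₀ (ne_of_gt hc) h
        linarith)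
    have inner : HasDerivAt (fun y : ℝ => c*(y-a)) c y := by
      simpa using ((hasDerivAt_id y).sub_const a).const_mul c
    have main := ((phiH_hasDerivAt t _ hst).comp y inner).const_mul (4*c^3)
    refine main.congr_deriv ?_
    have hxy : x - y ≠ 0 := sub_ne_zero.mpr (Ne.symm hy)
    have h1 : (1:ℝ) + (c*(y-a))^2 ≠ 0 := by positivity
    have hts : t - c*(y-a) ≠ 0 := sub_ne_zero.mpr (Ne.symm hst)
    rw [hH, hG2, ht]
    simp only []
    rw [ht] at hts
    rw [show c*(x-a) - c*(y-a) = c*(x-y) by ring]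
    have hc0 : c ≠ 0 := hc.ne'
    field_simp
  -- limits of Φ
  have htop : Tendsto Φ atTop (nhds (4*c^3 * (MH t * (π/2)))) := by
    have hin : Tendsto (fun y : ℝ => c*(y-a)) atTop atTop := by
      apply Tendsto.const_mul_atTop hc
      simpa [sub_eq_add_neg] using tendsto_atTop_add_const_right atTop (-a) tendsto_id
    exact ((phiH_tendsto_atTop t).comp hin).const_mul _
  have hbot : Tendsto Φ atBot (nhds (4*c^3 * (MH t * (-(π/2))))) := by
    have hin : Tendsto (fun y : ℝ => c*(y-a)) atBot atBot := by
      apply Tendsto.const_mul_atBot hc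
      simpa [sub_eq_add_neg] using tendsto_atBot_add_const_right atBot (-a) tendsto_id
    exact ((phiH_tendsto_atBot t).comp hin).const_mul _
  -- pointwise bound
  set m : ℝ := max 1 (c^2)⁻¹ with hm
  have m_ge1 : (1:ℝ) ≤ m := le_max_left _ _
  have hm2 : (1:ℝ) ≤ m * c^2 := by
    have h := le_max_right (1:ℝ) (c^2)⁻¹
    calc (1:ℝ) = (c^2)⁻¹ * c^2 := (inv_mul_cancel₀ (ne_of_gt (by positivity))).symm
    _ ≤ m * c^2 := by gcongr
  have hboundpt : ∀ ε : ℝ, 0 < ε → ∀ y : ℝ, ε ≤ |x - y| →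
      ‖H y‖ ≤ (24*c^3*m/ε) * (1+(y-a)^2)⁻¹ := by
    intro ε hε y hyε
    have hq : (0:ℝ) < 1 + c^2*(y-a)^2 := by positivity
    have hu : (0:ℝ) < 1 + (y-a)^2 := by positivity
    have hxy : (0:ℝ) < |x - y| := lt_of_lt_of_le hε hyε
    have key1 : |4*c^3*(6*c^2*(y-a)^2-2)| ≤ 24*c^3*(1+c^2*(y-a)^2) := by
      rw [abs_le]
      constructor <;> nlinarith [sq_nonneg (y-a), pow_pos hc 3, sq_nonneg (c*(y-a))]
    have key2 : 1+(y-a)^2 ≤ m*(1+c^2*(y-a)^2) := by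
      nlinarith [sq_nonneg (y-a), m_ge1, hm2]
    have hG2q : |G2 y| * (1+c^2*(y-a)^2) ≤ 24*c^3 := by
      rw [hG2]
      simp only []
      rw [abs_div, abs_of_pos (by positivity : (0:ℝ) < (1+c^2*(y-a)^2)^3),
        div_mul_eq_mul_div, div_le_iff₀ (by positivity)]
      have h1 : (1:ℝ) ≤ 1 + c^2*(y-a)^2 := by nlinarith [sq_nonneg (c*(y-a))]
      calc |4*c^3*(6*c^2*(y-a)^2-2)| * (1+c^2*(y-a)^2)
          ≤ (24*c^3*(1+c^2*(y-a)^2)) * (1+c^2*(y-a)^2) :=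
            mul_le_mul_of_nonneg_right key1 (le_of_lt hq)
        _ = 24*c^3*(1+c^2*(y-a)^2)^2 := by ring
        _ ≤ 24*c^3*(1+c^2*(y-a)^2)^3 :=
            mul_le_mul_of_nonneg_left (pow_le_pow_right₀ h1 (by norm_num)) (by positivity)
    have hG2u : |G2 y| * (1+(y-a)^2) ≤ 24*c^3*m := by
      nlinarith [mul_le_mul_of_nonneg_left key2 (abs_nonneg (G2 y)),
        mul_le_mul_of_nonneg_left hG2q (le_trans zero_le_one m_ge1)]
    have : ‖H y‖ = |G2 y| / |x - y| := by rw [hH]; simp only []; rw [Real.norm_eq_abs, abs_div]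
    rw [this, ← div_eq_mul_inv, div_le_div_iff₀ hxy hu]
    calc |G2 y| * (1+(y-a)^2) ≤ 24*c^3*m := hG2u
      _ = (24*c^3*m/ε) * ε := by field_simp
      _ ≤ (24*c^3*m/ε) * |x-y| := by gcongr
  -- measurability
  have hmeasH : Measurable H := by
    apply Measurable.div
    · apply Measurable.div <;> fun_prop
    · fun_prop
  -- integrability on the two half lines
  have hintIoi : ∀ ε : ℝ, 0 < ε → IntegrableOn H (Ioi (x+ε)) := by
    intro ε hε
    apply Integrable.mono' (g := fun y : ℝ => (24*c^3*m/ε)*(1+(y-a)^2)⁻¹)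
    · exact (((integrable_inv_one_add_sq).comp_sub_right a).const_mul _).integrableOn
    · exact hmeasH.aestronglyMeasurable.restrict
    · filter_upwards [ae_restrict_mem measurableSet_Ioi] with y hy
      apply hboundpt ε hε
      calc ε ≤ y - x := by have := mem_Ioi.mp hy; linarith
        _ ≤ |y - x| := le_abs_self _
        _ = |x - y| := abs_sub_comm _ _
  have hintNeg : ∀ ε : ℝ, 0 < ε → IntegrableOn (fun y => H (-y)) (Ioi (-(x-ε))) := by
    intro ε hε
    apply Integrable.mono' (g := fun y : ℝ => (24*c^3*m/ε)*(1+(y+a)^2)⁻¹)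
    · exact (((integrable_inv_one_add_sq).comp_add_right a).const_mul _).integrableOn
    · exact (hmeasH.comp measurable_neg).aestronglyMeasurable.restrict
    · filter_upwards [ae_restrict_mem measurableSet_Ioi] with y hy
      have hb : ε ≤ |x - (-y)| := by
        calc ε ≤ x - (-y) := by have := mem_Ioi.mp hy; linarith
          _ ≤ |x - (-y)| := le_abs_self _
      have := hboundpt ε hε (-y) hb
      calc ‖H (-y)‖ ≤ (24*c^3*m/ε) * (1+(-y-a)^2)⁻¹ := this
        _ = (24*c^3*m/ε) * (1+(y+a)^2)⁻¹ := by rw [show (-y-a)^2 = (y+a)^2 by ring]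
  -- the limit function
  have final : Tendsto (fun ε : ℝ => (1/π) *
      (4*c^3*π*MH t + (4*c^3*(phiH t (t - c*ε) - phiH t (t + c*ε)))))
      (nhdsWithin 0 (Set.Ioi 0)) (nhds (4*c^3*MH t)) := by
    have h0 := (((phiH_diff_tendsto t c hc).const_mul (4*c^3)).const_add
      (4*c^3*π*MH t)).const_mul (1/π)
    have e : (1/π) * (4*c^3*π*MH t + 4*c^3*0) = 4*c^3*MH t := by
      have hπ : (π:ℝ) ≠ 0 := Real.pi_ne_zero
      field_simp
      ring
    rw [e] at h0
    exact h0
  unfold HilbertPVR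
  apply final.congr'
  filter_upwards [self_mem_nhdsWithin] with ε hε
  have hε0 : (0:ℝ) < ε := hε
  -- FTC on the right half line
  have eqIoi : ∫ y in Ioi (x+ε), H y = 4*c^3*(MH t*(π/2)) - Φ (x+ε) := by
    apply integral_Ioi_of_hasDerivAt_of_tendsto' _ (hintIoi ε hε0) htop
    intro y hy
    apply hasDerivΦ
    have : x < y := by have := mem_Ici.mp hy; linarith
    exact this.ne'
  -- FTC on the left half line
  have eqIio : ∫ y in Iio (x-ε), H y = Φ (x-ε) - 4*c^3*(MH t*(-(π/2))) := by
    rw [← integral_Iic_eq_integral_Iio]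
    have hswap := integral_comp_neg_Iic (x-ε) (fun y => H (-y))
    simp only [neg_neg] at hswap
    rw [hswap]
    have hftc : ∫ y in Ioi (-(x-ε)), H (-y)
        = (-(4*c^3*(MH t*(-(π/2))))) - (- Φ (-(-(x-ε)))) := by
      apply integral_Ioi_of_hasDerivAt_of_tendsto' (f := fun y => -Φ (-y))
        _ (hintNeg ε hε0) ((hbot.comp tendsto_neg_atTop_atBot).neg)
      intro y hy
      have h1 : -y ≠ x := by
        have : -y < x := by have := mem_Ici.mp hy; linarith
        exact this.ne
      have := ((hasDerivΦ (-y) h1).comp y (hasDerivAt_neg y)).neg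
      simpa [Function.comp_def, Pi.neg_def] using this
    rw [hftc]
    simp only [neg_neg]
    ring
  -- decomposition of the region
  have hset : {y : ℝ | ε < |x - y|} = Iio (x-ε) ∪ Ioi (x+ε) := by
    ext y
    simp only [mem_setOf_eq, mem_union, mem_Iio, mem_Ioi, lt_abs]
    constructor
    · rintro (h|h)
      · left; linarith
      · right; linarith
    · rintro (h|h)
      · left; linarith
      · right; linarith
  have hdisj : Disjoint (Iio (x-ε)) (Ioi (x+ε)) :=
    (Iic_disjoint_Ioi (by linarith)).mono_left Iio_subset_Iic_self
  have hintIio : IntegrableOn H (Iio (x-ε)) := by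
    apply Integrable.mono' (g := fun y : ℝ => (24*c^3*m/ε)*(1+(y-a)^2)⁻¹)
    · exact (((integrable_inv_one_add_sq).comp_sub_right a).const_mul _).integrableOn
    · exact hmeasH.aestronglyMeasurable.restrict
    · filter_upwards [ae_restrict_mem measurableSet_Iio] with y hy
      apply hboundpt ε hε0
      calc ε ≤ x - y := by have := mem_Iio.mp hy; linarith
        _ ≤ |x - y| := le_abs_self _
  rw [← hH, hset, setIntegral_union hdisj measurableSet_Ioi hintIio (hintIoi ε hε0),
    eqIio, eqIoi]
  simp only [hΦ]
  rw [show c*(x-ε-a) = t - c*ε by rw [ht]; ring,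
    show c*(x+ε-a) = t + c*ε by rw [ht]; ring]
  ring

lemma spatial1 (c C t z : ℝ) (hc : 0 < c) :
    HasDerivAt (fun z => BOsoliton c C z t)
      (-8*c^3*(z-c*t+C)/(1+c^2*(z-c*t+C)^2)^2) z := by
  have hq : (0:ℝ) < 1 + c^2*(z-c*t+C)^2 := by positivity
  have hin : HasDerivAt (fun z : ℝ => 1 + c^2*(z-c*t+C)^2) (c^2*(2*(z-c*t+C))) z := by
    have h1 : HasDerivAt (fun z : ℝ => z-c*t+C) 1 z := by
      simpa using ((hasDerivAt_id z).sub_const (c*t)).add_const C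
    simpa using ((h1.pow 2).const_mul (c^2)).const_add 1
  have main := (hasDerivAt_const z (4*c)).div hin (ne_of_gt hq)
  unfold BOsoliton
  refine main.congr_deriv ?_
  field_simp
  ring

lemma spatial2 (c C t z : ℝ) (hc : 0 < c) :
    HasDerivAt (fun z => -8*c^3*(z-c*t+C)/(1+c^2*(z-c*t+C)^2)^2)
      (4*c^3*(6*c^2*(z-c*t+C)^2-2)/(1+c^2*(z-c*t+C)^2)^3) z := by
  have hq : (0:ℝ) < 1 + c^2*(z-c*t+C)^2 := by positivity
  have h1 : HasDerivAt (fun z : ℝ => z-c*t+C) 1 z := by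
    simpa using ((hasDerivAt_id z).sub_const (c*t)).add_const C
  have hin : HasDerivAt (fun z : ℝ => 1 + c^2*(z-c*t+C)^2) (c^2*(2*(z-c*t+C))) z := by
    simpa using ((h1.pow 2).const_mul (c^2)).const_add 1
  have hnum : HasDerivAt (fun z : ℝ => -8*c^3*(z-c*t+C)) (-8*c^3) z := by
    simpa only [mul_one] using h1.const_mul (-8*c^3)
  have hden := hin.pow 2
  have main := hnum.div hden (pow_ne_zero _ (ne_of_gt hq))
  refine main.congr_deriv ?_
  simp only [Pi.pow_apply]
  field_simp
  ring

lemma timederiv (c C x t : ℝ) (hc : 0 < c) :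
    HasDerivAt (fun s => BOsoliton c C x s)
      (8*c^4*(x-c*t+C)/(1+c^2*(x-c*t+C)^2)^2) t := by
  have hq : (0:ℝ) < 1 + c^2*(x-c*t+C)^2 := by positivity
  have h1 : HasDerivAt (fun s : ℝ => x-c*s+C) (-c) t := by
    simpa using (((hasDerivAt_id t).const_mul c).const_sub x).add_const C
  have hin : HasDerivAt (fun s : ℝ => 1 + c^2*(x-c*s+C)^2)
      (c^2*(2*(x-c*t+C)*(-c))) t := by
    simpa [mul_comm, mul_assoc] using ((h1.pow 2).const_mul (c^2)).const_add 1
  have main := (hasDerivAt_const t (4*c)).div hin (ne_of_gt hq)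
  unfold BOsoliton
  refine main.congr_deriv ?_
  field_simp
  ring


/-- The soliton is a pointwise classical solution of the Benjamin–Ono equation
`u_t = H u_xx - u u_x`. -/
theorem BO_soliton_solves (c C : ℝ) (hc : 0 < c) :
    ContDiff ℝ (⊤ : ℕ∞) (fun p : ℝ × ℝ => BOsoliton c C p.1 p.2) ∧
    ∀ x t : ℝ, ∃ A : ℝ,
      HilbertPVR (deriv (deriv (fun z : ℝ => BOsoliton c C z t))) x A ∧
      deriv (fun s : ℝ => BOsoliton c C x s) t =
        A - BOsoliton c C x t * deriv (fun z : ℝ => BOsoliton c C z t) x := by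
  constructor
  · unfold BOsoliton
    apply ContDiff.div contDiff_const
    · exact contDiff_const.add (contDiff_const.mul
        (((contDiff_fst.sub (contDiff_const.mul contDiff_snd)).add contDiff_const).pow 2))
    · intro p; positivity
  · intro x t
    refine ⟨4*c^3 * MH (c*(x-(c*t-C))), ?_, ?_⟩
    · have key := hilbert_main c (c*t-C) x hc
      have hdd : deriv (deriv (fun z : ℝ => BOsoliton c C z t))
          = fun y => 4*c^3*(6*c^2*(y-c*t+C)^2-2)/(1+c^2*(y-c*t+C)^2)^3 := by
        have h1 : deriv (fun z : ℝ => BOsoliton c C z t)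
            = fun z => -8*c^3*(z-c*t+C)/(1+c^2*(z-c*t+C)^2)^2 :=
          funext fun z => (spatial1 c C t z hc).deriv
        rw [h1]
        exact funext fun z => (spatial2 c C t z hc).deriv
      have hfeq : (fun y => 4*c^3*(6*c^2*(y-(c*t-C))^2-2)/(1+c^2*(y-(c*t-C))^2)^3)
          = deriv (deriv (fun z : ℝ => BOsoliton c C z t)) := by
        rw [hdd]
        funext y
        rw [show y-(c*t-C) = y-c*t+C by ring]
      rwa [hfeq] at key
    · rw [(timederiv c C x t hc).deriv, (spatial1 c C t x hc).deriv]
      have hq : (0:ℝ) < 1 + c^2*(x-c*t+C)^2 := by positivity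
      have hq2 : (0:ℝ) < 1 + (c*(x-(c*t-C)))^2 := by positivity
      unfold BOsoliton MH
      field_simp
      ring
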